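/- ∑_{j=0}^∞ binom(1/2, j)^2 j = 1/π, where binom(1/2, j) is the generalized binomial coefficient. -/

import Mathlib

/-!
The partial sums telescope: from `binom(1/2, N+1) = binom(1/2, N) (1/2 - N) / (N + 1)` one gets
`∑_{j<N} binom(1/2, j)² j = 4 N² (N - 1) binom(1/2, N)²`. The same recurrence identifies
`binom(1/2, k+1)⁻²` with `4 (k+1)² (2k+1) W k`, where `W k` is the `k`-th partial Wallis product,
so the partial sums are `k / ((2k+1) W k) → (1/2) / (π/2) = 1/π`.
-/

open scoped Real

/-- The generalized binomial coefficient `r(r-1)⋯(r-j+1)/j!`. -/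
noncomputable def gbinom (r : ℝ) (j : ℕ) : ℝ :=
  (∏ k ∈ Finset.range j, (r - k)) / (Nat.factorial j)

open Filter Finset Topology Real.Wallis

theorem gbinom_succ (r : ℝ) (j : ℕ) : gbinom r (j + 1) = gbinom r j * (r - j) / (j + 1) := by
  simp only [gbinom, prod_range_succ, Nat.factorial_succ, Nat.cast_mul, Nat.cast_succ]
  field_simp

theorem sum_range_gbinom_half_sq_mul (N : ℕ) :
    ∑ j ∈ range N, gbinom (1/2) j ^ 2 * j = 4 * N ^ 2 * (N - 1) * gbinom (1/2) N ^ 2 := by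
  induction N with
  | zero => simp
  | succ N ih =>
    rw [sum_range_succ, ih, gbinom_succ]
    push_cast
    field_simp
    ring

theorem gbinom_half_succ_sq_mul_W (k : ℕ) :
    4 * (k + 1) ^ 2 * (2 * k + 1) * W k * gbinom (1/2) (k + 1) ^ 2 = 1 := by
  induction k with
  | zero => simp [W, gbinom]; norm_num
  | succ k ih =>
    rw [W_succ, gbinom_succ (1/2) (k + 1)]
    push_cast
    field_simp
    linear_combination (2 * k + 3) * (2 * k + 1) * ih

theorem sum_range_succ_gbinom_half_sq_mul (k : ℕ) :
    ∑ j ∈ range (k + 1), gbinom (1/2) j ^ 2 * j = k / (2 * k + 1) / W k := by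
  rw [sum_range_gbinom_half_sq_mul, div_div, eq_div_iff (mul_pos (by positivity) (W_pos k)).ne']
  push_cast
  linear_combination (k : ℝ) * gbinom_half_succ_sq_mul_W k

theorem tendsto_sum_range_gbinom_half_sq_mul :
    Tendsto (fun N ↦ ∑ j ∈ range N, gbinom (1/2) j ^ 2 * j) atTop (𝓝 (1 / π)) := by
  rw [← tendsto_add_atTop_iff_nat 1]
  simp only [sum_range_succ_gbinom_half_sq_mul]
  have hlim : Tendsto (fun k : ℕ ↦ (k : ℝ) / (2 * k + 1) / W k) atTop (𝓝 (1 / 2 / (π / 2))) :=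
    Stirling.tendsto_self_div_two_mul_self_add_one.div tendsto_W_nhds_pi_div_two (by positivity)
  rwa [show (1 : ℝ) / 2 / (π / 2) = 1 / π by field_simp] at hlim

theorem stmt5 : (∑' j : ℕ, gbinom (1/2) j ^ 2 * (j : ℝ)) = 1 / π :=
  ((hasSum_iff_tendsto_nat_of_nonneg (fun j ↦ by positivity) _).mpr
    tendsto_sum_range_gbinom_half_sq_mul).tsum_eq
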